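/- Fix symmetric matrices D and E ⪰ 0 and a constant f ≥ 0. Define h(t) = min{Tr(DX) : 0 ⪯ X ⪯ I_n, Tr(EX) ≤ t} for t ≥ 0. Then h is continuous, convex, nonincreasing, and constant on [t̄, ∞) where t̄ = Tr(E·P⁻) and P⁻ is the projection onto the negative eigenspace of D. Moreover for any 0 ≤ a < b: h(b) + √(f+a) ≤ min_{t∈[a,b]}(h(t) + √(f+t)) ≤ h(b) + √(f+b). -/

import Mathlib

open Matrix

/-- Orthogonal projection onto the span of eigenvectors of `D` with negative eigenvalues. -/
noncomputable def projNeg {n : ℕ} {D : Matrix (Fin n) (Fin n) ℝ} (hD : D.IsHermitian) :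
    Matrix (Fin n) (Fin n) ℝ :=
  (hD.eigenvectorUnitary : Matrix (Fin n) (Fin n) ℝ) *
    (Matrix.diagonal fun i => if hD.eigenvalues i < 0 then (1 : ℝ) else 0) *
    (star (hD.eigenvectorUnitary : Matrix (Fin n) (Fin n) ℝ))

/-- `h(t) = min { Tr(DX) : 0 ⪯ X ⪯ I, Tr(EX) ≤ t }`. -/
noncomputable def hFun {n : ℕ} (D E : Matrix (Fin n) (Fin n) ℝ) (t : ℝ) : ℝ :=
  sInf {r : ℝ | ∃ X : Matrix (Fin n) (Fin n) ℝ,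
    X.PosSemidef ∧ (1 - X).PosSemidef ∧ (E * X).trace ≤ t ∧ r = (D * X).trace}


variable {n : ℕ}



lemma psd_diag_nonneg {M : Matrix (Fin n) (Fin n) ℝ} (hM : M.PosSemidef) (i : Fin n) :
    0 ≤ M i i := by
  have h := hM.dotProduct_mulVec_nonneg (Pi.single i 1)
  simpa [dotProduct, mulVec, Pi.single_apply, Finset.sum_ite_eq'] using h

lemma psd_trace_nonneg {M : Matrix (Fin n) (Fin n) ℝ} (hM : M.PosSemidef) :
    0 ≤ M.trace := by
  rw [Matrix.trace]
  exact Finset.sum_nonneg fun i _ => psd_diag_nonneg hM i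

lemma psd_trace_mul_nonneg {A B : Matrix (Fin n) (Fin n) ℝ} (hA : A.PosSemidef)
    (hB : B.PosSemidef) : 0 ≤ (A * B).trace := by
  obtain ⟨s, hsh, hss⟩ : ∃ s : Matrix (Fin n) (Fin n) ℝ, s.IsHermitian ∧ s * s = B :=
    by
      set U : Matrix (Fin n) (Fin n) ℝ := (hB.1.eigenvectorUnitary : Matrix (Fin n) (Fin n) ℝ)
      have h1 : star U * U = 1 := Unitary.coe_star_mul_self _
      have hs : B = U * diagonal hB.1.eigenvalues * star U := by
        simpa using hB.1.spectral_theorem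
      have hd : (fun i => Real.sqrt (hB.1.eigenvalues i)) * (fun i => Real.sqrt (hB.1.eigenvalues i))
          = hB.1.eigenvalues :=
        funext fun i => Real.mul_self_sqrt (hB.eigenvalues_nonneg i)
      refine ⟨U * diagonal (fun i => Real.sqrt (hB.1.eigenvalues i)) * star U, ?_, ?_⟩
      · unfold Matrix.IsHermitian
        simp [conjTranspose_mul, Matrix.mul_assoc, diagonal_conjTranspose, Matrix.star_eq_conjTranspose,
          Matrix.conjTranspose_eq_transpose_of_trivial, transpose_transpose]
      · calc U * diagonal (fun i => Real.sqrt (hB.1.eigenvalues i)) * star U *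
              (U * diagonal (fun i => Real.sqrt (hB.1.eigenvalues i)) * star U)
            = U * (diagonal (fun i => Real.sqrt (hB.1.eigenvalues i)) * (star U * U) *
              diagonal (fun i => Real.sqrt (hB.1.eigenvalues i))) * star U := by
                simp only [mul_assoc]
          _ = B := by rw [h1, mul_one, diagonal_mul_diagonal', ← Pi.mul_def, hd, ← hs]
  have h1 : (A * B).trace = (s * A * s).trace := by
    rw [← hss, ← mul_assoc, Matrix.trace_mul_cycle]
  rw [h1]
  have hpsd : (s * A * s).PosSemidef := by
    have := hA.mul_mul_conjTranspose_same s
    rwa [hsh.eq] at this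
  exact psd_trace_nonneg hpsd



section conj
variable {U : Matrix (Fin n) (Fin n) ℝ}

lemma conj_mul_conj (hU : U ∈ Matrix.unitaryGroup (Fin n) ℝ) (d₁ d₂ : Fin n → ℝ) :
    (U * diagonal d₁ * star U) * (U * diagonal d₂ * star U) =
      U * diagonal (d₁ * d₂) * star U := by
  have h1 : star U * U = 1 := hU.1
  calc (U * diagonal d₁ * star U) * (U * diagonal d₂ * star U)
      = U * diagonal d₁ * (star U * U) * diagonal d₂ * star U := by
        simp only [mul_assoc]
    _ = U * (diagonal d₁ * diagonal d₂) * star U := by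
        rw [h1, mul_one]; simp only [mul_assoc]
    _ = U * diagonal (d₁ * d₂) * star U := by rw [diagonal_mul_diagonal]; rfl

lemma conj_psd (d : Fin n → ℝ) (hd : ∀ i, 0 ≤ d i) :
    (U * diagonal d * star U).PosSemidef := by
  have := (Matrix.PosSemidef.diagonal (n := Fin n) hd).mul_mul_conjTranspose_same U
  rwa [← star_eq_conjTranspose] at this

lemma conj_herm (d : Fin n → ℝ) : (U * diagonal d * star U).IsHermitian := by
  unfold Matrix.IsHermitian
  rw [conjTranspose_mul, conjTranspose_mul, ← star_eq_conjTranspose U,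
    ← star_eq_conjTranspose (star U), star_star]
  rw [diagonal_conjTranspose]
  simp only [star_trivial, mul_assoc]

lemma conj_one (hU : U ∈ Matrix.unitaryGroup (Fin n) ℝ) :
    U * diagonal (fun _ => (1:ℝ)) * star U = 1 := by
  have h2 : U * star U = 1 := hU.2
  rw [diagonal_one, mul_one, h2]

lemma trace_conj_mul (d : Fin n → ℝ) (M : Matrix (Fin n) (Fin n) ℝ) :
    (U * diagonal d * star U * M).trace = ∑ i, d i * (star U * M * U) i i := by
  rw [mul_assoc (U * diagonal d), Matrix.trace_mul_cycle U (diagonal d) (star U * M),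
    Matrix.trace_mul_cycle (star U * M) U (diagonal d)]
  simp [Matrix.trace, Matrix.diag, Matrix.mul_diagonal, mul_comm, mul_assoc]
end conj

lemma real_spectral {A : Matrix (Fin n) (Fin n) ℝ} (hA : A.IsHermitian) :
    A = (hA.eigenvectorUnitary : Matrix (Fin n) (Fin n) ℝ) * diagonal hA.eigenvalues *
      star (hA.eigenvectorUnitary : Matrix (Fin n) (Fin n) ℝ) := by
  have := hA.spectral_theorem
  simpa using this

section X
variable {A X : Matrix (Fin n) (Fin n) ℝ} (hA : A.IsHermitian)

lemma conj_unit_psd (hX : X.PosSemidef) (U : Matrix (Fin n) (Fin n) ℝ) :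
    (star U * X * U).PosSemidef := by
  have := hX.conjTranspose_mul_mul_same U
  rwa [← star_eq_conjTranspose] at this

lemma one_sub_conj_unit {U : Matrix (Fin n) (Fin n) ℝ}
    (hU : U ∈ Matrix.unitaryGroup (Fin n) ℝ) :
    1 - star U * X * U = star U * (1 - X) * U := by
  have h1 : star U * U = 1 := hU.1
  rw [mul_sub, sub_mul, mul_one, h1]

lemma conj_unit_diag_mem {U : Matrix (Fin n) (Fin n) ℝ}
    (hU : U ∈ Matrix.unitaryGroup (Fin n) ℝ)
    (hX : X.PosSemidef) (hX1 : (1 - X).PosSemidef) (i : Fin n) :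
    (star U * X * U) i i ∈ Set.Icc (0:ℝ) 1 := by
  constructor
  · exact psd_diag_nonneg (conj_unit_psd hX U) i
  · have h2 : (1 - star U * X * U).PosSemidef := by
      rw [one_sub_conj_unit hU]; exact conj_unit_psd hX1 U
    have := psd_diag_nonneg h2 i
    simp only [Matrix.sub_apply, Matrix.one_apply_eq] at this
    linarith
end X

section lb
variable {D X : Matrix (Fin n) (Fin n) ℝ}

lemma trace_herm_mul (hD : D.IsHermitian) (X : Matrix (Fin n) (Fin n) ℝ) :
    (D * X).trace = ∑ i, hD.eigenvalues i *
      ((star (hD.eigenvectorUnitary : Matrix (Fin n) (Fin n) ℝ)) * X *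
        (hD.eigenvectorUnitary : Matrix (Fin n) (Fin n) ℝ)) i i := by
  conv_lhs => rw [real_spectral hD]
  exact trace_conj_mul _ _

lemma lb_of_interval (hD : D.IsHermitian) (hX : X.PosSemidef) (hX1 : (1 - X).PosSemidef) :
    (∑ i, if hD.eigenvalues i < 0 then hD.eigenvalues i else 0) ≤ (D * X).trace := by
  rw [trace_herm_mul hD X]
  apply Finset.sum_le_sum
  intro i _
  have hY := conj_unit_diag_mem (hD.eigenvectorUnitary).2 hX hX1 i
  set y := ((star (hD.eigenvectorUnitary : Matrix (Fin n) (Fin n) ℝ)) * X *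
        (hD.eigenvectorUnitary : Matrix (Fin n) (Fin n) ℝ)) i i
  by_cases h : hD.eigenvalues i < 0
  · simp only [h, if_true]
    nlinarith [hY.1, hY.2]
  · simp only [h, if_false]
    push_neg at h
    exact mul_nonneg h hY.1

lemma projNeg_psd (hD : D.IsHermitian) : (projNeg hD).PosSemidef := by
  unfold projNeg
  exact conj_psd _ (fun i => by positivity)

lemma one_sub_projNeg_psd (hD : D.IsHermitian) : (1 - projNeg hD).PosSemidef := by
  have h1 : (1 : Matrix (Fin n) (Fin n) ℝ) =
      (hD.eigenvectorUnitary : Matrix (Fin n) (Fin n) ℝ) * diagonal (fun _ => (1:ℝ)) *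
        star (hD.eigenvectorUnitary : Matrix (Fin n) (Fin n) ℝ) :=
    (conj_one (hD.eigenvectorUnitary).2).symm
  unfold projNeg
  rw [h1]
  have : ((hD.eigenvectorUnitary : Matrix (Fin n) (Fin n) ℝ) * diagonal (fun _ => (1:ℝ)) *
        star (hD.eigenvectorUnitary : Matrix (Fin n) (Fin n) ℝ)) -
      ((hD.eigenvectorUnitary : Matrix (Fin n) (Fin n) ℝ) *
        (Matrix.diagonal fun i => if hD.eigenvalues i < 0 then (1 : ℝ) else 0) *
        star (hD.eigenvectorUnitary : Matrix (Fin n) (Fin n) ℝ)) =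
      (hD.eigenvectorUnitary : Matrix (Fin n) (Fin n) ℝ) *
        (Matrix.diagonal fun i => (1:ℝ) - (if hD.eigenvalues i < 0 then (1 : ℝ) else 0)) *
        star (hD.eigenvectorUnitary : Matrix (Fin n) (Fin n) ℝ) := by
    rw [← sub_mul, ← mul_sub, diagonal_sub]
  rw [this]
  exact conj_psd _ (fun i => by by_cases h : hD.eigenvalues i < 0 <;> simp [h])

lemma real_star_mul_self_mul (hD : D.IsHermitian) :
    star (hD.eigenvectorUnitary : Matrix (Fin n) (Fin n) ℝ) * D *
      (hD.eigenvectorUnitary : Matrix (Fin n) (Fin n) ℝ) = diagonal hD.eigenvalues := by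
  simpa [Unitary.conjStarAlgAut_star_apply] using hD.conjStarAlgAut_star_eigenvectorUnitary

lemma trace_mul_projNeg (hD : D.IsHermitian) :
    (D * projNeg hD).trace = ∑ i, if hD.eigenvalues i < 0 then hD.eigenvalues i else 0 := by
  rw [Matrix.trace_mul_comm]
  unfold projNeg
  rw [trace_conj_mul, real_star_mul_self_mul hD]
  apply Finset.sum_congr rfl
  intro i _
  simp only [diagonal_apply_eq]
  split <;> simp
end lb

def feas {n : ℕ} (D E : Matrix (Fin n) (Fin n) ℝ) (t : ℝ) : Set ℝ :=
  {r : ℝ | ∃ X : Matrix (Fin n) (Fin n) ℝ,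
    X.PosSemidef ∧ (1 - X).PosSemidef ∧ (E * X).trace ≤ t ∧ r = (D * X).trace}

lemma hFun_eq (D E : Matrix (Fin n) (Fin n) ℝ) (t : ℝ) : hFun D E t = sInf (feas D E t) := rfl

noncomputable def mNeg {D : Matrix (Fin n) (Fin n) ℝ} (hD : D.IsHermitian) : ℝ :=
  ∑ i, if hD.eigenvalues i < 0 then hD.eigenvalues i else 0

section hfun
variable {D E : Matrix (Fin n) (Fin n) ℝ}

lemma zero_mem_feas {t : ℝ} (ht : 0 ≤ t) : (0:ℝ) ∈ feas D E t :=
  ⟨0, Matrix.PosSemidef.zero, by rw [sub_zero]; exact Matrix.PosSemidef.one,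
    by rw [mul_zero, trace_zero]; exact ht, by rw [mul_zero, trace_zero]⟩

lemma feas_nonempty {t : ℝ} (ht : 0 ≤ t) : (feas D E t).Nonempty := ⟨0, zero_mem_feas ht⟩

lemma feas_lb (hD : D.IsHermitian) {t : ℝ} {r : ℝ} (hr : r ∈ feas D E t) : mNeg hD ≤ r := by
  obtain ⟨X, hX, hX1, -, rfl⟩ := hr
  exact lb_of_interval hD hX hX1

lemma feas_bddBelow (hD : D.IsHermitian) (t : ℝ) : BddBelow (feas D E t) :=
  ⟨mNeg hD, fun r hr => feas_lb hD hr⟩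

lemma hFun_le (hD : D.IsHermitian) {t : ℝ} {X : Matrix (Fin n) (Fin n) ℝ} (hX : X.PosSemidef)
    (hX1 : (1 - X).PosSemidef) (htr : (E * X).trace ≤ t) : hFun D E t ≤ (D * X).trace := by
  rw [hFun_eq]
  exact csInf_le (feas_bddBelow hD t) ⟨X, hX, hX1, htr, rfl⟩

lemma mNeg_le_hFun (hD : D.IsHermitian) {t : ℝ} (ht : 0 ≤ t) : mNeg hD ≤ hFun D E t := by
  rw [hFun_eq]
  exact le_csInf (feas_nonempty ht) (fun r hr => feas_lb hD hr)

lemma hFun_nonpos (hD : D.IsHermitian) {t : ℝ} (ht : 0 ≤ t) : hFun D E t ≤ 0 := by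
  rw [hFun_eq]
  exact csInf_le (feas_bddBelow hD t) (zero_mem_feas ht)

lemma hFun_antitone (hD : D.IsHermitian) : AntitoneOn (hFun D E) (Set.Ici 0) := by
  intro s hs t ht hst
  rw [hFun_eq, hFun_eq]
  refine csInf_le_csInf (feas_bddBelow hD t) (feas_nonempty hs) ?_
  rintro r ⟨X, hX, hX1, htr, rfl⟩
  exact ⟨X, hX, hX1, htr.trans hst, rfl⟩

lemma hFun_const_ge (hD : D.IsHermitian) (hE : E.PosSemidef) {t : ℝ} (ht : (E * projNeg hD).trace ≤ t) :
    hFun D E t = mNeg hD := by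
  refine le_antisymm ?_ ?_
  · have := hFun_le (E := E) hD (projNeg_psd hD) (one_sub_projNeg_psd hD) ht
    rwa [trace_mul_projNeg hD] at this
  · refine mNeg_le_hFun hD ((psd_trace_mul_nonneg hE (projNeg_psd hD)).trans ht)
end hfun

lemma psd_smul {X : Matrix (Fin n) (Fin n) ℝ} (hX : X.PosSemidef) {c : ℝ} (hc : 0 ≤ c) :
    (c • X).PosSemidef := by
  refine PosSemidef.of_dotProduct_mulVec_nonneg ?_ (fun x => ?_)
  · rw [Matrix.IsHermitian, conjTranspose_smul, hX.1.eq, star_trivial]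
  · rw [smul_mulVec, dotProduct_smul, smul_eq_mul]
    exact mul_nonneg hc (hX.dotProduct_mulVec_nonneg x)

lemma comb_mem_feas {D E : Matrix (Fin n) (Fin n) ℝ} {x y a b r₁ r₂ : ℝ}
    (ha : 0 ≤ a) (hb : 0 ≤ b) (hab : a + b = 1)
    (h₁ : r₁ ∈ feas D E x) (h₂ : r₂ ∈ feas D E y) :
    a * r₁ + b * r₂ ∈ feas D E (a * x + b * y) := by
  obtain ⟨X₁, hX₁, hX₁', htr₁, rfl⟩ := h₁
  obtain ⟨X₂, hX₂, hX₂', htr₂, rfl⟩ := h₂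
  refine ⟨a • X₁ + b • X₂, (psd_smul hX₁ ha).add (psd_smul hX₂ hb), ?_, ?_, ?_⟩
  · have key : 1 - (a • X₁ + b • X₂) = a • (1 - X₁) + b • (1 - X₂) := by
      have h1 : a • (1:Matrix (Fin n) (Fin n) ℝ) + b • 1 = 1 := by
        rw [← add_smul, hab, one_smul]
      calc 1 - (a • X₁ + b • X₂) = (a • (1:Matrix (Fin n) (Fin n) ℝ) + b • 1) - (a • X₁ + b • X₂) := by rw [h1]
        _ = a • (1 - X₁) + b • (1 - X₂) := by rw [smul_sub, smul_sub]; abel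
    rw [key]
    exact (psd_smul hX₁' ha).add (psd_smul hX₂' hb)
  · rw [mul_add, Matrix.mul_smul, Matrix.mul_smul, trace_add, trace_smul, trace_smul,
      smul_eq_mul, smul_eq_mul]
    exact add_le_add (mul_le_mul_of_nonneg_left htr₁ ha) (mul_le_mul_of_nonneg_left htr₂ hb)
  · rw [mul_add, Matrix.mul_smul, Matrix.mul_smul, trace_add, trace_smul, trace_smul,
      smul_eq_mul, smul_eq_mul]

lemma hFun_convex {D E : Matrix (Fin n) (Fin n) ℝ} (hD : D.IsHermitian) :
    ConvexOn ℝ (Set.Ici 0) (hFun D E) := by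
  refine ⟨convex_Ici 0, ?_⟩
  intro x hx y hy a b ha hb hab
  simp only [smul_eq_mul]
  rcases eq_or_lt_of_le ha with rfl | ha'
  · simp only [add_zero, zero_add] at hab
    subst hab
    simp
  rcases eq_or_lt_of_le hb with rfl | hb'
  · simp only [add_zero] at hab
    subst hab
    simp
  have claim0 : ∀ r₁ ∈ feas D E x, ∀ r₂ ∈ feas D E y,
      hFun D E (a * x + b * y) ≤ a * r₁ + b * r₂ := by
    intro r₁ h₁ r₂ h₂
    rw [hFun_eq]
    exact csInf_le (feas_bddBelow hD _) (comb_mem_feas ha hb hab h₁ h₂)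
  have claim1 : ∀ r₂ ∈ feas D E y, hFun D E (a * x + b * y) ≤ a * hFun D E x + b * r₂ := by
    intro r₂ h₂
    have : (hFun D E (a * x + b * y) - b * r₂) / a ≤ hFun D E x := by
      rw [hFun_eq D E x]
      refine le_csInf (feas_nonempty (Set.mem_Ici.mp hx)) (fun r₁ h₁ => ?_)
      rw [div_le_iff₀ ha']
      have := claim0 r₁ h₁ r₂ h₂
      linarith [mul_comm a r₁]
    rw [div_le_iff₀ ha'] at this
    linarith [mul_comm (hFun D E x) a]
  have : (hFun D E (a * x + b * y) - a * hFun D E x) / b ≤ hFun D E y := by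
    rw [hFun_eq D E y]
    refine le_csInf (feas_nonempty (Set.mem_Ici.mp hy)) (fun r₂ h₂ => ?_)
    rw [div_le_iff₀ hb']
    have := claim1 r₂ h₂
    linarith [mul_comm (hFun D E y) b]
  rw [div_le_iff₀ hb'] at this
  linarith [mul_comm (hFun D E y) b]

section subsq
variable {X : Matrix (Fin n) (Fin n) ℝ}

lemma eig_dot_self (hX : X.PosSemidef) (i : Fin n) :
    star (⇑(hX.1.eigenvectorBasis i)) ⬝ᵥ ⇑(hX.1.eigenvectorBasis i) = 1 := by
  have hn : ‖hX.1.eigenvectorBasis i‖ = 1 := hX.1.eigenvectorBasis.orthonormal.1 i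
  have h2 : inner (𝕜 := ℝ) (hX.1.eigenvectorBasis i) (hX.1.eigenvectorBasis i) = (1:ℝ) := by
    rw [real_inner_self_eq_norm_sq, hn]; norm_num
  rw [PiLp.inner_apply] at h2
  simpa [dotProduct, sq] using h2

lemma eigenvalues_le_one (hX : X.PosSemidef) (hX1 : (1 - X).PosSemidef) (i : Fin n) :
    hX.1.eigenvalues i ≤ 1 := by
  have h0 := hX1.dotProduct_mulVec_nonneg (⇑(hX.1.eigenvectorBasis i))
  have hmv : X *ᵥ ⇑(hX.1.eigenvectorBasis i) =
      hX.1.eigenvalues i • ⇑(hX.1.eigenvectorBasis i) := hX.1.mulVec_eigenvectorBasis i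
  rw [sub_mulVec, one_mulVec, dotProduct_sub, hmv, dotProduct_smul, smul_eq_mul,
    eig_dot_self hX i, mul_one] at h0
  linarith

lemma sub_sq_psd (hX : X.PosSemidef) (hX1 : (1 - X).PosSemidef) :
    (X - X * X).PosSemidef := by
  have hs := real_spectral hX.1
  have hsq : X * X = (hX.1.eigenvectorUnitary : Matrix (Fin n) (Fin n) ℝ) *
      diagonal (hX.1.eigenvalues * hX.1.eigenvalues) *
      star (hX.1.eigenvectorUnitary : Matrix (Fin n) (Fin n) ℝ) := by
    conv_lhs => rw [hs]
    exact conj_mul_conj (hX.1.eigenvectorUnitary).2 _ _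
  rw [hsq]
  nth_rewrite 1 [hs]
  rw [← sub_mul, ← mul_sub, diagonal_sub]
  refine conj_psd _ (fun i => ?_)
  simp only [Pi.sub_apply, Pi.mul_apply]
  have h1 := hX.eigenvalues_nonneg i
  have h2 := eigenvalues_le_one hX hX1 i
  nlinarith

end subsq

lemma trace_CS (A B : Matrix (Fin n) (Fin n) ℝ) :
    ((A * B).trace)^2 ≤ (Aᵀ * A).trace * (Bᵀ * B).trace := by
  have h1 : (A * B).trace = ∑ p : Fin n × Fin n, A p.1 p.2 * B p.2 p.1 := by
    rw [Matrix.trace]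
    simp [Matrix.diag, Matrix.mul_apply, Fintype.sum_prod_type]
  have h2 : (Aᵀ * A).trace = ∑ p : Fin n × Fin n, (A p.1 p.2)^2 := by
    rw [Matrix.trace]
    simp [Matrix.diag, Matrix.mul_apply, Fintype.sum_prod_type, sq]
    rw [Finset.sum_comm]
  have h3 : (Bᵀ * B).trace = ∑ p : Fin n × Fin n, (B p.2 p.1)^2 := by
    rw [Matrix.trace]
    simp [Matrix.diag, Matrix.mul_apply, Fintype.sum_prod_type, sq]
  rw [h1, h2, h3]
  exact Finset.sum_mul_sq_le_sq_mul_sq _ _ _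

lemma neg_sqrt_le {x K : ℝ} (h : x^2 ≤ K) : -Real.sqrt K ≤ x := by
  have h1 : |x| ≤ Real.sqrt K := by
    rw [← Real.sqrt_sq_eq_abs]
    exact Real.sqrt_le_sqrt h
  have := neg_abs_le x
  linarith

section nearzero
variable {D E : Matrix (Fin n) (Fin n) ℝ}

lemma conj_add {U : Matrix (Fin n) (Fin n) ℝ} (d₁ d₂ : Fin n → ℝ) :
    U * diagonal d₁ * star U + U * diagonal d₂ * star U = U * diagonal (d₁ + d₂) * star U := by
  rw [← add_mul, ← mul_add, diagonal_add]
  rfl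

lemma near_zero (hD : D.IsHermitian) (hE : E.PosSemidef) :
    ∃ C : ℝ, 0 ≤ C ∧ ∀ t, 0 ≤ t → hFun D E 0 ≤ hFun D E t + C * Real.sqrt t := by
  classical
  set W : Matrix (Fin n) (Fin n) ℝ := (hE.1.eigenvectorUnitary : Matrix (Fin n) (Fin n) ℝ) with hW
  set μ : Fin n → ℝ := hE.1.eigenvalues with hμ
  by_cases hpos : ∃ i, 0 < μ i
  case neg =>
    have hE0 : E = 0 := by
      have h0 : μ = fun _ => 0 := by
        funext i
        push_neg at hpos
        exact le_antisymm (hpos i) (hE.eigenvalues_nonneg i)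
      have h1 := real_spectral hE.1
      rw [← hμ, ← hW, h0] at h1
      rw [h1]
      simp only [diagonal_zero, mul_zero, zero_mul]
    refine ⟨0, le_refl 0, fun t ht => ?_⟩
    rw [zero_mul, add_zero, hFun_eq, hFun_eq]
    refine csInf_le_csInf (feas_bddBelow hD 0) (feas_nonempty ht) ?_
    rintro r ⟨X, hX, hX1, -, rfl⟩
    exact ⟨X, hX, hX1, by rw [hE0, zero_mul, trace_zero], rfl⟩
  case pos =>
    obtain ⟨i₀, hi₀⟩ := hpos
    set s : Finset (Fin n) := Finset.univ.filter (fun i => 0 < μ i) with hs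
    have hsne : s.Nonempty := ⟨i₀, by simp [hs, hi₀]⟩
    set c : ℝ := s.inf' hsne μ with hc
    have hcpos : 0 < c :=
      (Finset.lt_inf'_iff hsne).mpr (fun i hi => (Finset.mem_filter.mp hi).2)
    have hcle : ∀ i, 0 < μ i → c ≤ μ i := fun i hi =>
      Finset.inf'_le μ (Finset.mem_filter.mpr ⟨Finset.mem_univ i, hi⟩)
    set p : Fin n → ℝ := fun i => if 0 < μ i then 1 else 0 with hp
    set q : Fin n → ℝ := fun i => if 0 < μ i then 0 else 1 with hq
    set P : Matrix (Fin n) (Fin n) ℝ := W * diagonal p * star W with hP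
    set Q : Matrix (Fin n) (Fin n) ℝ := W * diagonal q * star W with hQ
    have hUW : W ∈ Matrix.unitaryGroup (Fin n) ℝ := (hE.1.eigenvectorUnitary).2
    have hPQ : P + Q = 1 := by
      rw [hP, hQ, conj_add]
      have hpq : p + q = fun _ => (1:ℝ) := by
        funext i; by_cases h : 0 < μ i <;> simp [hp, hq, h]
      rw [hpq, conj_one hUW]
    have hqq : q * q = q := by funext i; by_cases h : 0 < μ i <;> simp [hq, h]
    have hpp : p * p = p := by funext i; by_cases h : 0 < μ i <;> simp [hp, h]
    have hQQ : Q * Q = Q := by rw [hQ, conj_mul_conj hUW, hqq]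
    have hPP : P * P = P := by rw [hP, conj_mul_conj hUW, hpp]
    have hQherm : Q.IsHermitian := conj_herm q
    have hPpsd : P.PosSemidef := conj_psd p (fun i => by by_cases h : 0 < μ i <;> simp [hp, h])
    have hQstar : star Q = Q := by rw [Matrix.star_eq_conjTranspose]; exact hQherm.eq
    have hP1 : P = 1 - Q := by rw [← hPQ]; abel
    have hEc : (E - c • P).PosSemidef := by
      have hsm : W * diagonal (c • p) * star W = c • P := by
        rw [diagonal_smul, Matrix.mul_smul, Matrix.smul_mul, hP]
      have hrepr : E - c • P = W * diagonal (μ - c • p) * star W := by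
        rw [← hsm]
        conv_lhs => rw [real_spectral hE.1]
        rw [← hW, ← hμ, ← sub_mul, ← mul_sub, diagonal_sub]
        rfl
      rw [hrepr]
      refine conj_psd _ (fun i => ?_)
      simp only [Pi.sub_apply, Pi.smul_apply, smul_eq_mul]
      by_cases h : 0 < μ i
      · simp only [hp, h, if_true, mul_one]
        linarith [hcle i h]
      · simp only [hp, h, if_false, mul_zero, sub_zero]
        exact hE.eigenvalues_nonneg i
    have hEQ : E * Q = 0 := by
      conv_lhs => rw [real_spectral hE.1]
      rw [← hW, ← hμ, hQ, conj_mul_conj hUW]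
      have hμq : μ * q = fun _ => 0 := by
        funext i
        by_cases h : 0 < μ i
        · simp [hq, h]
        · push_neg at h
          have h0 : μ i = 0 := le_antisymm h (hE.eigenvalues_nonneg i)
          simp [hq, h0]
      rw [hμq]
      simp only [diagonal_zero, mul_zero, zero_mul]
    set K : ℝ := (Dᵀ * D).trace / c with hK
    have hDt : Dᵀ = D := by rw [← Matrix.conjTranspose_eq_transpose_of_trivial, hD.eq]
    have hDDpsd : (D * D).PosSemidef := by
      have h1 := Matrix.posSemidef_conjTranspose_mul_self D
      rwa [hD.eq] at h1
    have hDD : 0 ≤ (Dᵀ * D).trace := by rw [hDt]; exact psd_trace_nonneg hDDpsd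
    have hK0 : 0 ≤ K := div_nonneg hDD hcpos.le
    refine ⟨2 * Real.sqrt K, by positivity, fun t ht => ?_⟩
    have key : ∀ r ∈ feas D E t, hFun D E 0 ≤ r + 2 * Real.sqrt K * Real.sqrt t := by
      rintro r ⟨X, hX, hX1, htr, rfl⟩
      set X' : Matrix (Fin n) (Fin n) ℝ := Q * X * Q with hX'def
      have hX'psd : X'.PosSemidef := by
        have h1 := hX.mul_mul_conjTranspose_same Q
        rwa [← Matrix.star_eq_conjTranspose, hQstar] at h1
      have hX'1 : (1 - X').PosSemidef := by
        have hid : P + Q * (1 - X) * Q = 1 - X' := by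
          rw [mul_sub, sub_mul, mul_one, hQQ, hX'def, ← hPQ]
          abel
        rw [← hid]
        refine hPpsd.add ?_
        have h1 := hX1.mul_mul_conjTranspose_same Q
        rwa [← Matrix.star_eq_conjTranspose, hQstar] at h1
      have hX'tr : (E * X').trace ≤ 0 := by
        rw [hX'def, show E * (Q * X * Q) = E * Q * X * Q by simp only [mul_assoc], hEQ,
          zero_mul, zero_mul, trace_zero]
      have hmem : hFun D E 0 ≤ (D * X').trace := hFun_le hD hX'psd hX'1 hX'tr
      have hXt : Xᵀ = X := by rw [← Matrix.conjTranspose_eq_transpose_of_trivial, hX.1.eq]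
      have hPt : Pᵀ = P := by
        rw [← Matrix.conjTranspose_eq_transpose_of_trivial, hPpsd.1.eq]
      have hQt : Qᵀ = Q := by
        rw [← Matrix.conjTranspose_eq_transpose_of_trivial, hQherm.eq]
      have hXXpsd : (X * X).PosSemidef := by simpa [pow_two] using hX.pow 2
      have hPX : (P * X).trace ≤ t / c := by
        rw [le_div_iff₀ hcpos]
        have h1 : 0 ≤ ((E - c • P) * X).trace := psd_trace_mul_nonneg hEc hX
        rw [sub_mul, trace_sub, Matrix.smul_mul, trace_smul, smul_eq_mul] at h1
        linarith
      have hPXX : (P * (X * X)).trace ≤ t / c := by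
        have h1 : 0 ≤ (P * (X - X * X)).trace :=
          psd_trace_mul_nonneg hPpsd (sub_sq_psd hX hX1)
        rw [mul_sub, trace_sub] at h1
        linarith
      have hPXX0 : 0 ≤ (P * (X * X)).trace := psd_trace_mul_nonneg hPpsd hXXpsd
      have hdec : (D * X').trace
          = (D * X).trace - (D * (P * X)).trace - (D * (Q * X * P)).trace := by
        have hXid : X' = X - P * X - Q * X * P := by
          rw [hX'def, hP1, sub_mul, one_mul, mul_sub, mul_one]
          abel
        rw [hXid, mul_sub, mul_sub, trace_sub, trace_sub]
      have hKt : Real.sqrt (K * t) = Real.sqrt K * Real.sqrt t := Real.sqrt_mul hK0 t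
      have hT1 : -(Real.sqrt K * Real.sqrt t) ≤ (D * (P * X)).trace := by
        have hcs := trace_CS D (P * X)
        have htr1 : ((P * X)ᵀ * (P * X)).trace = (P * (X * X)).trace := by
          rw [transpose_mul, hXt, hPt, mul_assoc, ← mul_assoc P P X, hPP,
            Matrix.trace_mul_comm, mul_assoc]
        rw [htr1] at hcs
        have hb : ((D * (P * X)).trace)^2 ≤ K * t := by
          refine le_trans hcs ?_
          calc (Dᵀ * D).trace * (P * (X * X)).trace
              ≤ (Dᵀ * D).trace * (t / c) := mul_le_mul_of_nonneg_left hPXX hDD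
            _ = K * t := by rw [hK]; field_simp
        have := neg_sqrt_le hb
        rwa [hKt] at this
      have hT2 : -(Real.sqrt K * Real.sqrt t) ≤ (D * (Q * X * P)).trace := by
        have hassoc : D * (Q * X * P) = (D * Q) * (X * P) := by
          simp only [mul_assoc]
        have hcs := trace_CS (D * Q) (X * P)
        have htr2 : ((X * P)ᵀ * (X * P)).trace = (P * (X * X)).trace := by
          rw [transpose_mul, hXt, hPt, Matrix.trace_mul_comm, mul_assoc,
            ← mul_assoc P P X, hPP, Matrix.trace_mul_comm, mul_assoc]
        have htr3 : ((D * Q)ᵀ * (D * Q)).trace ≤ (Dᵀ * D).trace := by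
          rw [transpose_mul, hQt, hDt, Matrix.trace_mul_comm, mul_assoc,
            ← mul_assoc Q Q D, hQQ, Matrix.trace_mul_comm, mul_assoc,
            Matrix.trace_mul_comm]
          have h4 : (D * D) * P = D * D - D * D * Q := by
            rw [hP1, mul_sub, mul_one]
          have h5 := psd_trace_mul_nonneg hDDpsd hPpsd
          rw [h4, trace_sub] at h5
          linarith
        rw [htr2] at hcs
        have hb : (((D * Q) * (X * P)).trace)^2 ≤ K * t := by
          refine le_trans hcs ?_
          calc ((D * Q)ᵀ * (D * Q)).trace * (P * (X * X)).trace
              ≤ (Dᵀ * D).trace * (P * (X * X)).trace :=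
                mul_le_mul_of_nonneg_right htr3 hPXX0
            _ ≤ (Dᵀ * D).trace * (t / c) := mul_le_mul_of_nonneg_left hPXX hDD
            _ = K * t := by rw [hK]; field_simp
        have h6 := neg_sqrt_le hb
        rw [hKt] at h6
        rwa [hassoc]
      calc hFun D E 0 ≤ (D * X').trace := hmem
        _ = (D * X).trace - (D * (P * X)).trace - (D * (Q * X * P)).trace := hdec
        _ ≤ (D * X).trace + 2 * Real.sqrt K * Real.sqrt t := by linarith
    have hfin : hFun D E 0 - 2 * Real.sqrt K * Real.sqrt t ≤ hFun D E t := by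
      rw [hFun_eq D E t]
      refine le_csInf (feas_nonempty ht) (fun r hr => ?_)
      linarith [key r hr]
    linarith
end nearzero

section cont
variable {D E : Matrix (Fin n) (Fin n) ℝ}

lemma hFun_mod (hD : D.IsHermitian) (hE : E.PosSemidef) :
    ∃ C : ℝ, 0 ≤ C ∧ ∀ s t : ℝ, 0 ≤ s → s ≤ t →
      hFun D E s ≤ hFun D E t + C * Real.sqrt (t - s) := by
  obtain ⟨C, hC0, hC⟩ := near_zero hD hE
  refine ⟨C, hC0, fun s t hs hst => ?_⟩
  rcases eq_or_lt_of_le hst with rfl | hlt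
  · simp
  · have ht0 : 0 < t := lt_of_le_of_lt hs hlt
    have hts : 0 < t - s := by linarith
    have hconv := (hFun_convex (E := E) hD).2 (Set.mem_Ici.mpr ht0.le)
      (Set.mem_Ici.mpr (le_refl 0)) (show (0:ℝ) ≤ s / t by positivity)
      (show (0:ℝ) ≤ (t - s) / t by positivity)
      (show s / t + (t - s) / t = 1 by field_simp; ring)
    have hcomb : (s / t) • t + ((t - s) / t) • (0:ℝ) = s := by
      simp only [smul_eq_mul, mul_zero, add_zero]; field_simp
    rw [hcomb] at hconv
    simp only [smul_eq_mul] at hconv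
    have hz := hC t ht0.le
    have hb0 : 0 ≤ (t - s) / t := by positivity
    have step1 : hFun D E s ≤ hFun D E t + C * ((t - s) / t * Real.sqrt t) := by
      have h1 : (t - s) / t * hFun D E 0 ≤ (t - s) / t * (hFun D E t + C * Real.sqrt t) :=
        mul_le_mul_of_nonneg_left hz hb0
      have h2 : s / t + (t - s) / t = 1 := by field_simp; ring
      have h3 : s / t * hFun D E t + (t - s) / t * hFun D E t = hFun D E t := by
        rw [← add_mul, h2, one_mul]
      rw [mul_add] at h1
      have h4 : (t - s) / t * (C * Real.sqrt t) = C * ((t - s) / t * Real.sqrt t) := by ring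
      linarith
    have step2 : (t - s) / t * Real.sqrt t ≤ Real.sqrt (t - s) := by
      have hsq : Real.sqrt t * Real.sqrt t = t := Real.mul_self_sqrt ht0.le
      have hstpos : 0 < Real.sqrt t := Real.sqrt_pos.mpr ht0
      have key : t - s ≤ Real.sqrt (t - s) * Real.sqrt t := by
        have e1 : Real.sqrt (t - s) * Real.sqrt t = Real.sqrt ((t - s) * t) :=
          (Real.sqrt_mul hts.le t).symm
        have e2 : t - s = Real.sqrt ((t - s) * (t - s)) := (Real.sqrt_mul_self hts.le).symm
        rw [e1, e2]
        apply Real.sqrt_le_sqrt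
        nlinarith
      rw [div_mul_eq_mul_div, div_le_iff₀ ht0]
      calc (t - s) * Real.sqrt t ≤ (Real.sqrt (t - s) * Real.sqrt t) * Real.sqrt t := by
            exact mul_le_mul_of_nonneg_right key (Real.sqrt_nonneg t)
        _ = Real.sqrt (t - s) * t := by rw [mul_assoc, hsq]
        _ = Real.sqrt (t - s) * t := rfl
    calc hFun D E s ≤ hFun D E t + C * ((t - s) / t * Real.sqrt t) := step1
      _ ≤ hFun D E t + C * Real.sqrt (t - s) := by
          exact add_le_add_right (mul_le_mul_of_nonneg_left step2 hC0) _

lemma hFun_cont (hD : D.IsHermitian) (hE : E.PosSemidef) :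
    ContinuousOn (hFun D E) (Set.Ici 0) := by
  obtain ⟨C, hC0, hC⟩ := hFun_mod hD hE
  have hdiff : ∀ x ∈ Set.Ici (0:ℝ), ∀ y ∈ Set.Ici (0:ℝ),
      |hFun D E y - hFun D E x| ≤ C * Real.sqrt |y - x| := by
    intro x hx y hy
    rcases le_total x y with h | h
    · have h1 := hFun_antitone (E := E) hD hx hy h
      have h2 := hC x y hx h
      rw [abs_of_nonneg (by linarith : (0:ℝ) ≤ y - x)]
      rw [abs_of_nonpos (by linarith : hFun D E y - hFun D E x ≤ 0)]
      linarith
    · have h1 := hFun_antitone (E := E) hD hy hx h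
      have h2 := hC y x hy h
      rw [abs_of_nonpos (by linarith : y - x ≤ 0), neg_sub]
      rw [abs_of_nonneg (by linarith : (0:ℝ) ≤ hFun D E y - hFun D E x)]
      linarith
  intro x hx
  refine Metric.continuousWithinAt_iff.mpr (fun ε hε => ?_)
  refine ⟨(ε / (C + 1))^2, by positivity, fun {y} hy hd => ?_⟩
  have hC1 : (0:ℝ) < C + 1 := by linarith
  rw [Real.dist_eq] at hd ⊢
  have h1 := hdiff x hx y hy
  have h2 : Real.sqrt |y - x| < ε / (C + 1) := by
    have := Real.sqrt_lt_sqrt (abs_nonneg _) hd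
    rwa [Real.sqrt_sq (by positivity)] at this
  have h3 : C * Real.sqrt |y - x| ≤ C * (ε / (C + 1)) :=
    mul_le_mul_of_nonneg_left h2.le hC0
  have h4 : C * (ε / (C + 1)) < ε := by
    rw [mul_div_assoc'] at *
    rw [div_lt_iff₀ hC1]
    nlinarith
  calc |hFun D E y - hFun D E x| ≤ C * Real.sqrt |y - x| := h1
    _ ≤ C * (ε / (C + 1)) := h3
    _ < ε := h4
end cont

/-- `h` is continuous, convex, nonincreasing on `[0,∞)`, constant on
`[t̄, ∞)` with `t̄ = Tr(E·P⁻)`, and for `0 ≤ a < b`: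
`h(b) + √(f+a) ≤ min_{t∈[a,b]}(h(t)+√(f+t)) ≤ h(b) + √(f+b)`. -/

theorem stmt15 {n : ℕ} (D E : Matrix (Fin n) (Fin n) ℝ)
    (hD : D.IsHermitian) (hE : E.PosSemidef) (f : ℝ) (hf : 0 ≤ f) :
    ContinuousOn (hFun D E) (Set.Ici 0) ∧
    ConvexOn ℝ (Set.Ici 0) (hFun D E) ∧
    AntitoneOn (hFun D E) (Set.Ici 0) ∧
    (∀ t : ℝ, (E * projNeg hD).trace ≤ t → hFun D E t = hFun D E ((E * projNeg hD).trace)) ∧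
    (∀ a b : ℝ, 0 ≤ a → a < b →
      hFun D E b + Real.sqrt (f + a) ≤
          sInf {r : ℝ | ∃ t ∈ Set.Icc a b, r = hFun D E t + Real.sqrt (f + t)} ∧
      sInf {r : ℝ | ∃ t ∈ Set.Icc a b, r = hFun D E t + Real.sqrt (f + t)} ≤
          hFun D E b + Real.sqrt (f + b)) := by
  refine ⟨hFun_cont hD hE, hFun_convex hD, hFun_antitone hD, ?_, ?_⟩
  · intro t ht
    rw [hFun_const_ge hD hE ht, hFun_const_ge hD hE (le_refl _)]
  · intro a b ha hab
    have hb : (0:ℝ) ≤ b := ha.trans hab.le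
    have hlb : ∀ r ∈ {r : ℝ | ∃ t ∈ Set.Icc a b, r = hFun D E t + Real.sqrt (f + t)},
        hFun D E b + Real.sqrt (f + a) ≤ r := by
      rintro r ⟨t, ⟨hta, htb⟩, rfl⟩
      have h1 : hFun D E b ≤ hFun D E t :=
        hFun_antitone (E := E) hD (Set.mem_Ici.mpr (ha.trans hta)) (Set.mem_Ici.mpr hb) htb
      have h2 : Real.sqrt (f + a) ≤ Real.sqrt (f + t) :=
        Real.sqrt_le_sqrt (by linarith)
      linarith
    have hmem : hFun D E b + Real.sqrt (f + b) ∈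
        {r : ℝ | ∃ t ∈ Set.Icc a b, r = hFun D E t + Real.sqrt (f + t)} :=
      ⟨b, ⟨hab.le, le_refl b⟩, rfl⟩
    exact ⟨le_csInf ⟨_, hmem⟩ hlb,
      csInf_le ⟨hFun D E b + Real.sqrt (f + a), hlb⟩ hmem⟩
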